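/- Let σ, b : ℝ → ℝ be continuous with σ > 0 and b(0) = 0, suppose that Σ exists, and let h be defined by h(0) = 0, h'(x) = exp(−Σ(x)). Then the function h² belongs to 𝒟_L; more precisely, h² is a C¹-generalized solution of L(h²) = ℓ̇ with ℓ̇ = (h')²σ², i.e., ℓ̇(x) = σ²(x) e^{−2Σ(x)}. -/

import Mathlib

open MeasureTheory Filter Topology Set

noncomputable section

/-- A mollifier: a Schwartz function with total integral one. -/
def IsMollifier (Φ : SchwartzMap ℝ ℝ) : Prop := (∫ x : ℝ, Φ x) = 1

/-- `Φₙ(x) = n Φ(n x)`. -/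
def moll (Φ : SchwartzMap ℝ ℝ) (n : ℕ) (x : ℝ) : ℝ := (n : ℝ) * Φ ((n : ℝ) * x)

/-- Convolution `(f ∗ g)(x) = ∫ f(x − y) g(y) dy`. -/
def convol (f g : ℝ → ℝ) (x : ℝ) : ℝ := ∫ y : ℝ, f (x - y) * g y

/-- `σₙ² = (σ² ∧ n) ∗ Φₙ`. -/
def sigmaSqReg (σ : ℝ → ℝ) (Φ : SchwartzMap ℝ ℝ) (n : ℕ) : ℝ → ℝ :=
  convol (fun x => min (σ x ^ 2) (n : ℝ)) (moll Φ n)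

/-- `bₙ = ((−n) ∨ (b ∧ n)) ∗ Φₙ`. -/
def bReg (b : ℝ → ℝ) (Φ : SchwartzMap ℝ ℝ) (n : ℕ) : ℝ → ℝ :=
  convol (fun x => max (-(n : ℝ)) (min (b x) (n : ℝ))) (moll Φ n)

/-- `x ↦ 2∫₀ˣ bₙ'/σₙ² dy`. -/
def SigmaApprox (σ b : ℝ → ℝ) (Φ : SchwartzMap ℝ ℝ) (n : ℕ) (x : ℝ) : ℝ :=
  2 * ∫ y in (0:ℝ)..x, deriv (bReg b Φ n) y / sigmaSqReg σ Φ n y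

/-- `Σ` exists, with value `Sg`: for every mollifier the approximations converge
uniformly on compact sets to the (mollifier-independent) continuous function `Sg`. -/
def SigmaExists (σ b Sg : ℝ → ℝ) : Prop :=
  Continuous Sg ∧
    ∀ Φ : SchwartzMap ℝ ℝ, IsMollifier Φ →
      TendstoLocallyUniformly (fun n => SigmaApprox σ b Φ n) Sg atTop

/-- The regularized operator `Lₙ g = (σₙ²/2) g'' + bₙ' g'`. -/
def Lreg (σ b : ℝ → ℝ) (Φ : SchwartzMap ℝ ℝ) (n : ℕ) (g : ℝ → ℝ) (x : ℝ) : ℝ :=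
  sigmaSqReg σ Φ n x / 2 * deriv (deriv g) x + deriv (bReg b Φ n) x * deriv g x

/-- `f` is a `C¹`-generalized solution of `L f = ℓ`. -/
def IsC1GenSolution (σ b f ℓ : ℝ → ℝ) : Prop :=
  ContDiff ℝ 1 f ∧ Continuous ℓ ∧
    ∀ Φ : SchwartzMap ℝ ℝ, IsMollifier Φ →
      ∃ fn : ℕ → ℝ → ℝ,
        (∀ n, ContDiff ℝ 2 (fn n)) ∧
        (∀ n, Continuous (Lreg σ b Φ n (fn n))) ∧
        TendstoLocallyUniformly fn f atTop ∧
        TendstoLocallyUniformly (fun n => deriv (fn n)) (deriv f) atTop ∧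
        TendstoLocallyUniformly (fun n => Lreg σ b Φ n (fn n)) ℓ atTop

/-- `h(x) = ∫₀ˣ e^{−Σ(y)} dy`, i.e. `h(0) = 0`, `h' = e^{−Σ}`. -/
def hFun (Sg : ℝ → ℝ) (x : ℝ) : ℝ := ∫ y in (0:ℝ)..x, Real.exp (-Sg y)

/-
The approximations are `fₙ = hₙ²` with `hₙ' = e^{-Sₙ}`, `Sₙ' = ρₙ = 2bₙ'/(σₙ² ∨ (n+1)⁻¹)`.
For any `h` with `h' = e^{-S}` one computes `Lₙ(h²) = σₙ² e^{-2S} + h e^{-S} (2bₙ' - σₙ² S')`, so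
wherever `σₙ² ≥ (n+1)⁻¹` the first-order terms cancel and `Lₙ fₙ = σₙ² e^{-2Sₙ}`. Since
`σₙ² → σ² > 0` locally uniformly (the truncation level `n` grows linearly while the second moment
of `Φₙ` decays like `n⁻²`), on every compact set this eventually holds, and there `Sₙ` coincides with
the approximations of `Σ`. Hence `Sₙ → Σ`, `fₙ → h²`, `fₙ' = 2hₙe^{-Sₙ} → 2he^{-Σ}` and
`Lₙ fₙ → σ² e^{-2Σ}` locally uniformly.
-/

section LocallyUniform

variable {α ι : Type*} [TopologicalSpace α] [LocallyCompactSpace α] {p : Filter ι}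

theorem TendstoLocallyUniformly.congr_eventuallyEqOn_isCompact {β : Type*} [UniformSpace β]
    {F G : ι → α → β} {f : α → β} (hF : TendstoLocallyUniformly F f p)
    (hFG : ∀ K, IsCompact K → ∀ᶠ n in p, EqOn (F n) (G n) K) :
    TendstoLocallyUniformly G f p := by
  rw [tendstoLocallyUniformly_iff_forall_isCompact] at hF ⊢
  exact fun K hK => (hF K hK).congr (hFG K hK)

theorem Continuous.comp_tendstoLocallyUniformly {β γ : Type*} [PseudoMetricSpace β]
    [ProperSpace β] [UniformSpace γ] {F : ι → α → β} {f : α → β} {g : β → γ}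
    (hg : Continuous g) (hf : Continuous f) (hF : TendstoLocallyUniformly F f p) :
    TendstoLocallyUniformly (fun n x => g (F n x)) (fun x => g (f x)) p := by
  rw [tendstoLocallyUniformly_iff_forall_isCompact] at hF ⊢
  intro K hK
  have ht : IsCompact (Metric.cthickening 1 (f '' K)) := (hK.image hf).cthickening
  refine UniformContinuousOn.comp_tendstoUniformlyOn_eventually ?_
    (fun x hx => Metric.self_subset_cthickening _ (mem_image_of_mem f hx))
    (ht.uniformContinuousOn_of_continuous hg.continuousOn) (hF K hK)
  filter_upwards [Metric.tendstoUniformlyOn_iff.mp (hF K hK) 1 one_pos] with n hn x hx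
  exact Metric.mem_cthickening_of_dist_le _ (f x) _ _ (mem_image_of_mem f hx)
    (by rw [dist_comm]; exact (hn x hx).le)

theorem TendstoLocallyUniformly.eventually_inv_succ_le {F : ℕ → α → ℝ} {f : α → ℝ}
    (hF : TendstoLocallyUniformly F f atTop) (hf : Continuous f) (hpos : ∀ x, 0 < f x)
    {K : Set α} (hK : IsCompact K) : ∀ᶠ n : ℕ in atTop, ∀ x ∈ K, ((n : ℝ) + 1)⁻¹ ≤ F n x := by
  obtain ⟨m, hm, hmK⟩ : ∃ m > 0, ∀ x ∈ K, m ≤ f x := by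
    rcases K.eq_empty_or_nonempty with rfl | hne
    · exact ⟨1, one_pos, by simp⟩
    obtain ⟨z, hz, hzmin⟩ := hK.exists_isMinOn hne hf.continuousOn
    exact ⟨f z, hpos z, fun x hx => hzmin hx⟩
  have hclose := Metric.tendstoUniformlyOn_iff.mp
    (tendstoLocallyUniformly_iff_forall_isCompact.mp hF K hK) (m / 2) (half_pos hm)
  have hsmall : ∀ᶠ n : ℕ in atTop, ((n : ℝ) + 1)⁻¹ ≤ m / 2 := by
    simpa only [one_div] using (tendsto_one_div_add_atTop_nhds_zero_nat (𝕜 := ℝ)).eventually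
      (eventually_le_nhds (half_pos hm))
  filter_upwards [hclose, hsmall] with n hn hsmall x hx
  have := hn x hx
  rw [Real.dist_eq, abs_lt] at this
  linarith [hmK x hx]

end LocallyUniform

theorem TendstoLocallyUniformly.intervalIntegral {ι E : Type*} [NormedAddCommGroup E]
    [NormedSpace ℝ E] {p : Filter ι} {F : ι → ℝ → E} {f : ℝ → E} (hF : ∀ n, Continuous (F n))
    (hf : Continuous f) (h : TendstoLocallyUniformly F f p) (a : ℝ) :
    TendstoLocallyUniformly (fun n x => ∫ y in a..x, F n y) (fun x => ∫ y in a..x, f y) p := by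
  rw [tendstoLocallyUniformly_iff_forall_isCompact] at h ⊢
  intro K hK
  obtain ⟨R, hKR⟩ := hK.isBounded.subset_closedBall a
  rw [Metric.tendstoUniformlyOn_iff]
  intro ε hε
  have hε' : 0 < ε / (|R| + 1) := by positivity
  filter_upwards [Metric.tendstoUniformlyOn_iff.mp (h _ (isCompact_closedBall a R)) _ hε']
    with n hn x hx
  have hxR : |x - a| ≤ R := by simpa [Real.dist_eq] using hKR hx
  have hbound : ∀ y ∈ uIoc a x, ‖f y - F n y‖ ≤ ε / (|R| + 1) := fun y hy =>
    (dist_eq_norm (f y) (F n y) ▸ hn y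
      ((convex_closedBall a R).ordConnected.uIcc_subset (Metric.mem_closedBall_self
        ((abs_nonneg _).trans hxR)) (hKR hx) (uIoc_subset_uIcc hy))).le
  rw [dist_eq_norm, ← intervalIntegral.integral_sub (hf.intervalIntegrable _ _)
    ((hF n).intervalIntegrable _ _)]
  calc ‖∫ y in a..x, f y - F n y‖ ≤ ε / (|R| + 1) * |x - a| :=
        intervalIntegral.norm_integral_le_of_norm_le_const hbound
    _ ≤ ε / (|R| + 1) * |R| := mul_le_mul_of_nonneg_left (hxR.trans (le_abs_self R)) hε'.le
    _ < ε := by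
        rw [div_mul_eq_mul_div, div_lt_iff₀ (by positivity)]
        nlinarith [abs_nonneg R]

theorem SchwartzMap.exists_abs_le_div_one_add_abs_sq (Φ : SchwartzMap ℝ ℝ) :
    ∃ C, ∀ x : ℝ, |Φ x| ≤ C / (1 + |x|) ^ 2 := by
  refine ⟨2 ^ 2 * ((Finset.Iic (2, 0)).sup fun m => SchwartzMap.seminorm ℝ m.1 m.2) Φ,
    fun x => ?_⟩
  have h := SchwartzMap.one_add_le_sup_seminorm_apply (𝕜 := ℝ) (m := (2, 0)) le_rfl le_rfl Φ x
  rw [norm_iteratedFDeriv_zero, Real.norm_eq_abs, Real.norm_eq_abs] at h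
  rw [le_div_iff₀ (by positivity), mul_comm]
  exact h

lemma integrable_inv_one_add_abs_sq : Integrable fun z : ℝ => ((1 + |z|) ^ 2)⁻¹ := by
  refine (integrable_one_add_norm (E := ℝ) (μ := volume) (r := 2) (by norm_num)).congr
    (Eventually.of_forall fun x => ?_)
  simp [Real.rpow_neg (by positivity : (0 : ℝ) ≤ 1 + |x|)]

lemma integrable_of_abs_le_div_one_add_abs_sq {g : ℝ → ℝ} {C : ℝ}
    (hg : AEStronglyMeasurable g) (hC : ∀ z, |g z| ≤ C / (1 + |z|) ^ 2) : Integrable g :=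
  (integrable_inv_one_add_abs_sq.const_mul C).mono' hg (Eventually.of_forall hC)

lemma abs_pow_mul_comp_mul_le {φ : ℝ → ℝ} {C : ℝ} (hφ : ∀ w, |φ w| ≤ C / (1 + |w|) ^ 2)
    {k : ℕ} (hk : k ≠ 0) (n : ℕ) (z : ℝ) :
    |(n : ℝ) ^ k * φ (n * z)| ≤ (n : ℝ) ^ k * C / (1 + |z|) ^ 2 := by
  rcases Nat.eq_zero_or_pos n with rfl | hn
  · simp [hk]
  have hC : 0 ≤ C := by simpa using (abs_nonneg _).trans (hφ 0)
  rw [abs_mul, abs_of_nonneg (by positivity), mul_div_assoc]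
  gcongr
  refine (hφ _).trans (div_le_div_of_nonneg_left hC (by positivity) ?_)
  have : |z| ≤ |(n : ℝ) * z| := by
    rw [abs_mul, Nat.abs_cast]
    exact le_mul_of_one_le_left (abs_nonneg z) (by exact_mod_cast hn)
  gcongr

lemma continuous_moll (Φ : SchwartzMap ℝ ℝ) (n : ℕ) : Continuous (moll Φ n) := by
  unfold moll
  fun_prop

lemma hasDerivAt_moll (Φ : SchwartzMap ℝ ℝ) (n : ℕ) (z : ℝ) :
    HasDerivAt (moll Φ n) ((n : ℝ) ^ 2 * deriv Φ (n * z)) z := by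
  have h := ((Φ.hasDerivAt (n * z)).comp z ((hasDerivAt_id z).const_mul (n : ℝ))).const_mul
    (n : ℝ)
  exact h.congr_deriv (by ring)

lemma integrable_moll (Φ : SchwartzMap ℝ ℝ) (n : ℕ) : Integrable (moll Φ n) := by
  obtain ⟨C, hC⟩ := Φ.exists_abs_le_div_one_add_abs_sq
  exact integrable_of_abs_le_div_one_add_abs_sq (continuous_moll Φ n).aestronglyMeasurable
    fun z => by simpa [moll] using abs_pow_mul_comp_mul_le hC one_ne_zero n z

lemma integral_moll {Φ : SchwartzMap ℝ ℝ} (hΦ : IsMollifier Φ) {n : ℕ} (hn : n ≠ 0) :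
    ∫ y, moll Φ n y = 1 := by
  have hn' : (0 : ℝ) < n := by positivity
  rw [IsMollifier] at hΦ
  simp only [moll]
  rw [integral_const_mul, Measure.integral_comp_mul_left (fun y => Φ y), hΦ, smul_eq_mul,
    mul_one, abs_of_pos (inv_pos.mpr hn'), mul_inv_cancel₀ hn'.ne']

lemma integral_abs_moll (Φ : SchwartzMap ℝ ℝ) {n : ℕ} (hn : n ≠ 0) :
    ∫ y, |moll Φ n y| = ∫ w, |Φ w| := by
  have hn' : (0 : ℝ) < n := by positivity
  simp only [moll, abs_mul, Nat.abs_cast]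
  rw [integral_const_mul, Measure.integral_comp_mul_left (fun w => |Φ w|), smul_eq_mul,
    abs_of_pos (inv_pos.mpr hn'), mul_inv_cancel_left₀ hn'.ne']

lemma SchwartzMap.integrable_sq_mul_abs (Φ : SchwartzMap ℝ ℝ) :
    Integrable fun w => w ^ 2 * |Φ w| := by
  simpa only [Real.norm_eq_abs, sq_abs] using Φ.integrable_pow_mul volume 2

lemma sq_mul_abs_moll (Φ : SchwartzMap ℝ ℝ) {n : ℕ} (hn : n ≠ 0) (y : ℝ) :
    y ^ 2 * |moll Φ n y| = (n : ℝ)⁻¹ * ((n * y) ^ 2 * |Φ (n * y)|) := by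
  have hn' : (n : ℝ) ≠ 0 := by positivity
  rw [moll, abs_mul, Nat.abs_cast]
  field_simp

lemma integrable_sq_mul_abs_moll (Φ : SchwartzMap ℝ ℝ) {n : ℕ} (hn : n ≠ 0) :
    Integrable fun y => y ^ 2 * |moll Φ n y| := by
  simp only [sq_mul_abs_moll Φ hn]
  exact ((Φ.integrable_sq_mul_abs.comp_mul_left' (by positivity)).const_mul _)

lemma integral_sq_mul_abs_moll (Φ : SchwartzMap ℝ ℝ) {n : ℕ} (hn : n ≠ 0) :
    ∫ y, y ^ 2 * |moll Φ n y| = ((n : ℝ) ^ 2)⁻¹ * ∫ w, w ^ 2 * |Φ w| := by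
  have hn' : (0 : ℝ) < n := by positivity
  simp only [sq_mul_abs_moll Φ hn]
  rw [integral_const_mul, Measure.integral_comp_mul_left (fun w => w ^ 2 * |Φ w|), smul_eq_mul,
    abs_of_pos (inv_pos.mpr hn'), ← mul_assoc, ← mul_inv, sq]

lemma convol_eq_integral_mul_sub (f g : ℝ → ℝ) (x : ℝ) :
    convol f g x = ∫ u, f u * g (x - u) := by
  rw [convol, ← integral_sub_left_eq_self _ volume x]
  simp only [sub_sub_cancel]

lemma continuous_convol {f g : ℝ → ℝ} {M : ℝ} (hf : Continuous f) (hfM : ∀ x, |f x| ≤ M)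
    (hg : Integrable g) : Continuous (convol f g) := by
  have h := BddAbove.continuous_convolution_left_of_integrable (ContinuousLinearMap.mul ℝ ℝ)
    ⟨M, by rintro _ ⟨x, rfl⟩; exact hfM x⟩ hf hg
  convert h using 1
  funext x
  rw [convolution_mul_swap]
  rfl

lemma one_add_abs_sq_le {x x₀ u : ℝ} (hx : |x - x₀| ≤ 1) :
    (1 + |x₀ - u|) ^ 2 ≤ 4 * (1 + |x - u|) ^ 2 := by
  have : |x₀ - u| ≤ 1 + |x - u| := by
    calc |x₀ - u| ≤ |x₀ - x| + |x - u| := abs_sub_le _ _ _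
      _ ≤ 1 + |x - u| := by rw [abs_sub_comm]; gcongr
  nlinarith [abs_nonneg (x - u), abs_nonneg (x₀ - u)]

/-- Differentiation under the integral sign, with the decay of `k'` supplying a dominating
function uniform over `x ∈ [x₀ - 1, x₀ + 1]`. -/
lemma hasDerivAt_convol {f k k' : ℝ → ℝ} {M C : ℝ} (hf : AEStronglyMeasurable f)
    (hfM : ∀ x, |f x| ≤ M) (hk : Integrable k) (hkk' : ∀ z, HasDerivAt k (k' z) z)
    (hk'c : Continuous k') (hk'C : ∀ z, |k' z| ≤ C / (1 + |z|) ^ 2) (x₀ : ℝ) :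
    HasDerivAt (convol f k) (convol f k' x₀) x₀ := by
  have hM : 0 ≤ M := (abs_nonneg _).trans (hfM 0)
  have hfk : ∀ x, Integrable fun u => f u * k (x - u) := fun x =>
    (hk.comp_sub_left x).bdd_mul hf (c := M) (Eventually.of_forall fun u => hfM u)
  have hconv : convol f k = fun x => ∫ u, f u * k (x - u) :=
    funext (convol_eq_integral_mul_sub f k)
  rw [hconv, convol_eq_integral_mul_sub]
  refine (hasDerivAt_integral_of_dominated_loc_of_deriv_le (F' := fun x u => f u * k' (x - u))
    (bound := fun u => M * (4 * C) * ((1 + |x₀ - u|) ^ 2)⁻¹) (Metric.ball_mem_nhds x₀ one_pos)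
    (Eventually.of_forall fun x => (hfk x).aestronglyMeasurable) (hfk x₀)
    (hf.mul (hk'c.comp (continuous_const.sub continuous_id)).aestronglyMeasurable)
    (Eventually.of_forall fun u x hx => ?_)
    ((integrable_inv_one_add_abs_sq.comp_sub_left x₀).const_mul _)
    (Eventually.of_forall fun u x _ => ?_)).2
  · have hx1 : |x - x₀| ≤ 1 := (Metric.mem_ball.mp hx).le
    have hC : 0 ≤ C := by simpa using (abs_nonneg _).trans (hk'C 0)
    rw [Real.norm_eq_abs, abs_mul, mul_assoc]
    refine mul_le_mul (hfM u) ((hk'C _).trans ?_) (abs_nonneg _) hM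
    rw [← div_eq_mul_inv, div_le_div_iff₀ (by positivity) (by positivity)]
    nlinarith [one_add_abs_sq_le (u := u) hx1]
  · simpa using ((hkk' (x - u)).comp x ((hasDerivAt_id x).sub_const u)).const_mul (f u)

lemma abs_min_sq_le (t : ℝ) (n : ℕ) : |min (t ^ 2) (n : ℝ)| ≤ n :=
  abs_le.mpr ⟨by linarith [le_min (sq_nonneg t) (Nat.cast_nonneg (α := ℝ) n)], min_le_right _ _⟩

lemma abs_max_neg_min_le (t : ℝ) (n : ℕ) : |max (-(n : ℝ)) (min t n)| ≤ n :=
  abs_le.mpr ⟨le_max_left _ _, max_le (by simp) (min_le_right _ _)⟩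

lemma continuous_sigmaSqReg {σ : ℝ → ℝ} (hσ : Continuous σ) (Φ : SchwartzMap ℝ ℝ) (n : ℕ) :
    Continuous (sigmaSqReg σ Φ n) :=
  continuous_convol (by fun_prop) (fun x => abs_min_sq_le (σ x) n) (integrable_moll Φ n)

lemma hasDerivAt_bReg {b : ℝ → ℝ} (hb : Continuous b) (Φ : SchwartzMap ℝ ℝ) (n : ℕ) (x : ℝ) :
    HasDerivAt (bReg b Φ n)
      (convol (fun x => max (-(n : ℝ)) (min (b x) n)) (fun z => (n : ℝ) ^ 2 * deriv Φ (n * z)) x)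
      x := by
  obtain ⟨C, hC⟩ := (SchwartzMap.derivCLM ℝ ℝ Φ).exists_abs_le_div_one_add_abs_sq
  exact hasDerivAt_convol (by fun_prop) (fun x => abs_max_neg_min_le (b x) n)
    (integrable_moll Φ n) (hasDerivAt_moll Φ n)
    (continuous_const.mul ((SchwartzMap.derivCLM ℝ ℝ Φ).continuous.comp (by fun_prop)))
    (abs_pow_mul_comp_mul_le hC two_ne_zero n) x

lemma continuous_deriv_bReg {b : ℝ → ℝ} (hb : Continuous b) (Φ : SchwartzMap ℝ ℝ) (n : ℕ) :
    Continuous (deriv (bReg b Φ n)) := by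
  obtain ⟨C, hC⟩ := (SchwartzMap.derivCLM ℝ ℝ Φ).exists_abs_le_div_one_add_abs_sq
  rw [funext fun x => (hasDerivAt_bReg hb Φ n x).deriv]
  exact continuous_convol (by fun_prop) (fun x => abs_max_neg_min_le (b x) n)
    (integrable_of_abs_le_div_one_add_abs_sq
      (continuous_const.mul ((SchwartzMap.derivCLM ℝ ℝ Φ).continuous.comp
        (by fun_prop))).aestronglyMeasurable
      (abs_pow_mul_comp_mul_le hC two_ne_zero n))

lemma sub_convol_moll_eq_integral {Φ : SchwartzMap ℝ ℝ} (hΦ : IsMollifier Φ) {n : ℕ}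
    (hn : n ≠ 0) {g : ℝ → ℝ} {x c : ℝ} (hint : Integrable fun y => (c - g (x - y)) * moll Φ n y) :
    c - convol g (moll Φ n) x = ∫ y, (c - g (x - y)) * moll Φ n y := by
  have hc : c = ∫ y, c * moll Φ n y := by rw [integral_const_mul, integral_moll hΦ hn, mul_one]
  have hgx : Integrable fun y => g (x - y) * moll Φ n y :=
    (((integrable_moll Φ n).const_mul c).sub hint).congr
      (Eventually.of_forall fun y => by simp only [Pi.sub_apply]; ring)
  conv_lhs => rw [hc]
  rw [convol, ← integral_sub ((integrable_moll Φ n).const_mul _) hgx]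
  simp only [sub_mul]

/-- Split the mollifier into `|y| < δ`, where `g (x - y)` is `ε`-close to `f x`, and the tail,
where `|f x - g (x - y)| ≤ B ≤ B y² / δ²`; the second moment of `Φₙ` is `n⁻²` times that of `Φ`. -/
lemma abs_sub_convol_moll_le {Φ : SchwartzMap ℝ ℝ} (hΦ : IsMollifier Φ) {n : ℕ} (hn : n ≠ 0)
    {f g : ℝ → ℝ} (hg : AEStronglyMeasurable g) {x ε δ B : ℝ} (hδ : 0 < δ)
    (hB : ∀ y, |f x - g y| ≤ B) (hε : ∀ y, |x - y| < δ → |f x - g y| ≤ ε) :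
    |f x - convol g (moll Φ n) x| ≤
      ε * (∫ w, |Φ w|) + B / (δ ^ 2 * n ^ 2) * ∫ w, w ^ 2 * |Φ w| := by
  have hB0 : 0 ≤ B := (abs_nonneg _).trans (hB 0)
  have hε0 : 0 ≤ ε := (abs_nonneg _).trans (hε x (by simpa using hδ))
  have hint : Integrable fun y => (f x - g (x - y)) * moll Φ n y :=
    (integrable_moll Φ n).bdd_mul (aestronglyMeasurable_const.sub (hg.comp_quasiMeasurePreserving
      (quasiMeasurePreserving_sub_left_of_right_invariant volume x))) (c := B)
      (Eventually.of_forall fun y => hB (x - y))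
  have hpt : ∀ y, |(f x - g (x - y)) * moll Φ n y| ≤
      ε * |moll Φ n y| + B / δ ^ 2 * (y ^ 2 * |moll Φ n y|) := by
    intro y
    rw [abs_mul]
    rcases lt_or_ge |y| δ with hy | hy
    · have := hε (x - y) (by rwa [sub_sub_cancel])
      have : 0 ≤ B / δ ^ 2 * (y ^ 2 * |moll Φ n y|) := by positivity
      nlinarith [abs_nonneg (moll Φ n y)]
    · have : 1 ≤ y ^ 2 / δ ^ 2 := by
        rw [one_le_div (by positivity), ← sq_abs y]
        gcongr
      calc |f x - g (x - y)| * |moll Φ n y| ≤ B * (y ^ 2 / δ ^ 2) * |moll Φ n y| := by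
            gcongr
            exact (hB _).trans (le_mul_of_one_le_right hB0 this)
        _ ≤ _ := by
            have : 0 ≤ ε * |moll Φ n y| := by positivity
            linarith [show B * (y ^ 2 / δ ^ 2) * |moll Φ n y| =
              B / δ ^ 2 * (y ^ 2 * |moll Φ n y|) by ring]
  calc |f x - convol g (moll Φ n) x| ≤ ∫ y, |(f x - g (x - y)) * moll Φ n y| := by
        rw [sub_convol_moll_eq_integral hΦ hn hint]; exact abs_integral_le_integral_abs
    _ ≤ ∫ y, (ε * |moll Φ n y| + B / δ ^ 2 * (y ^ 2 * |moll Φ n y|)) :=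
        integral_mono hint.abs (((integrable_moll Φ n).abs.const_mul ε).add
          ((integrable_sq_mul_abs_moll Φ hn).const_mul _)) hpt
    _ = _ := by
        rw [integral_add ((integrable_moll Φ n).abs.const_mul ε)
          ((integrable_sq_mul_abs_moll Φ hn).const_mul _), integral_const_mul, integral_const_mul,
          integral_abs_moll Φ hn, integral_sq_mul_abs_moll Φ hn]
        ring

theorem tendstoLocallyUniformly_convol_moll {Φ : SchwartzMap ℝ ℝ} (hΦ : IsMollifier Φ)
    {f : ℝ → ℝ} (hf : Continuous f) {g : ℕ → ℝ → ℝ} (hg : ∀ n, AEStronglyMeasurable (g n))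
    (hgn : ∀ n y, |g n y| ≤ n) (hgf : ∀ (n : ℕ) y, |f y| ≤ n → g n y = f y) :
    TendstoLocallyUniformly (fun n => convol (g n) (moll Φ n)) f atTop := by
  rw [tendstoLocallyUniformly_iff_forall_isCompact]
  intro K hK
  have hK' : IsCompact (Metric.cthickening 1 K) := hK.cthickening
  obtain ⟨M, hM⟩ := hK'.exists_bound_of_continuousOn hf.continuousOn
  set A := ∫ w, |Φ w|
  set A₂ := ∫ w, w ^ 2 * |Φ w|
  have hA : 0 ≤ A := integral_nonneg fun _ => abs_nonneg _
  have hA₂ : 0 ≤ A₂ := integral_nonneg fun _ => by positivity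
  rw [Metric.tendstoUniformlyOn_iff]
  intro ε hε
  obtain ⟨δ₀, hδ₀, hUC⟩ := Metric.uniformContinuousOn_iff.mp
    (hK'.uniformContinuousOn_of_continuous hf.continuousOn) (ε / (2 * (A + 1))) (by positivity)
  set δ := min δ₀ 1
  have hδ : 0 < δ := lt_min hδ₀ one_pos
  have htail : ∀ᶠ n : ℕ in atTop, 2 * A₂ / δ ^ 2 / n < ε / 2 :=
    (tendsto_const_div_atTop_nhds_zero_nat _).eventually (gt_mem_nhds (half_pos hε))
  filter_upwards [htail, tendsto_natCast_atTop_atTop.eventually_ge_atTop M,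
    eventually_ne_atTop 0] with n htail hMn hn x hx
  have hx' : x ∈ Metric.cthickening 1 K := Metric.self_subset_cthickening K hx
  have hn' : (0 : ℝ) < n := by positivity
  have key := abs_sub_convol_moll_le hΦ hn (hg n) (f := f) (x := x)
    (ε := ε / (2 * (A + 1))) (B := M + n) hδ (fun y => ?_) (fun y hy => ?_)
  · rw [Real.dist_eq]
    refine key.trans_lt ?_
    have h1 : ε / (2 * (A + 1)) * A < ε / 2 := by
      rw [div_mul_eq_mul_div, div_lt_div_iff₀ (by positivity) two_pos]
      nlinarith
    have h2 : (M + n) / (δ ^ 2 * n ^ 2) * A₂ ≤ 2 * A₂ / δ ^ 2 / n := by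
      rw [div_mul_eq_mul_div, div_div, div_le_div_iff₀ (by positivity) (by positivity)]
      have : (M + n) * A₂ ≤ 2 * n * A₂ := by nlinarith
      nlinarith [mul_le_mul_of_nonneg_right this (by positivity : (0 : ℝ) ≤ δ ^ 2 * n)]
    linarith
  · calc |f x - g n y| ≤ |f x| + |g n y| := abs_sub _ _
      _ ≤ M + n := add_le_add (by simpa using hM x hx') (hgn n y)
  · have hy' : y ∈ Metric.cthickening 1 K :=
      Metric.mem_cthickening_of_dist_le y x 1 K hx
        (by rw [Real.dist_eq, abs_sub_comm]; linarith [min_le_right δ₀ 1])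
    rw [hgf n y (by simpa using (hM y hy').trans hMn), ← Real.dist_eq]
    exact (hUC x hx' y hy' (by rw [Real.dist_eq]; exact hy.trans_le (min_le_left _ _))).le

theorem tendstoLocallyUniformly_sigmaSqReg {σ : ℝ → ℝ} (hσ : Continuous σ)
    {Φ : SchwartzMap ℝ ℝ} (hΦ : IsMollifier Φ) :
    TendstoLocallyUniformly (sigmaSqReg σ Φ) (fun x => σ x ^ 2) atTop :=
  tendstoLocallyUniformly_convol_moll hΦ (by fun_prop)
    (fun n => (by fun_prop : Continuous fun x => min (σ x ^ 2) (n : ℝ)).aestronglyMeasurable)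
    (fun n y => abs_min_sq_le (σ y) n) (fun n y hy => min_eq_left ((le_abs_self _).trans hy))

lemma contDiff_succ_intervalIntegral {f : ℝ → ℝ} {k : ℕ} (hf : ContDiff ℝ k f) (a : ℝ) :
    ContDiff ℝ (k + 1) fun x => ∫ y in a..x, f y := by
  rw [contDiff_succ_iff_deriv]
  refine ⟨intervalIntegral.differentiable_integral_of_continuous hf.continuous, by simp, ?_⟩
  rwa [funext (hf.continuous.deriv_integral f a)]

lemma hasDerivAt_hFun {S : ℝ → ℝ} (hS : Continuous S) (x : ℝ) :
    HasDerivAt (hFun S) (Real.exp (-S x)) x :=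
  (Continuous.integral_hasStrictDerivAt (by fun_prop) 0 x).hasDerivAt

lemma contDiff_hFun {S : ℝ → ℝ} {k : ℕ} (hS : ContDiff ℝ k S) : ContDiff ℝ (k + 1) (hFun S) :=
  contDiff_succ_intervalIntegral (Real.contDiff_exp.comp hS.neg) 0

lemma continuous_hFun {S : ℝ → ℝ} (hS : Continuous S) : Continuous (hFun S) :=
  continuous_iff_continuousAt.mpr fun x => (hasDerivAt_hFun hS x).continuousAt

lemma deriv_hFun_sq {S : ℝ → ℝ} (hS : Continuous S) :
    deriv (fun x => hFun S x ^ 2) = fun x => 2 * hFun S x * Real.exp (-S x) :=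
  funext fun x => ((hasDerivAt_hFun hS x).pow 2).deriv.trans (by ring)

lemma hasDerivAt_two_mul_hFun_mul_exp {S ρ : ℝ → ℝ} (hS : ∀ x, HasDerivAt S (ρ x) x) (x : ℝ) :
    HasDerivAt (fun x => 2 * hFun S x * Real.exp (-S x))
      (2 * Real.exp (-S x) ^ 2 - 2 * hFun S x * ρ x * Real.exp (-S x)) x := by
  have hSc : Continuous S := continuous_iff_continuousAt.mpr fun x => (hS x).continuousAt
  exact (((hasDerivAt_hFun hSc x).const_mul 2).mul (hS x).fun_neg.exp).congr_deriv (by ring)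

lemma lreg_hFun_sq {S ρ : ℝ → ℝ} (hS : ∀ x, HasDerivAt S (ρ x) x) (σ b : ℝ → ℝ)
    (Φ : SchwartzMap ℝ ℝ) (n : ℕ) (x : ℝ) :
    Lreg σ b Φ n (fun x => hFun S x ^ 2) x =
      sigmaSqReg σ Φ n x * Real.exp (-(2 * S x)) +
        hFun S x * Real.exp (-S x) * (2 * deriv (bReg b Φ n) x - sigmaSqReg σ Φ n x * ρ x) := by
  have hSc : Continuous S := continuous_iff_continuousAt.mpr fun x => (hS x).continuousAt
  rw [Lreg, deriv_hFun_sq hSc, (hasDerivAt_two_mul_hFun_mul_exp hS x).deriv,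
    show -(2 * S x) = -S x + -S x by ring, Real.exp_add]
  ring

lemma continuous_lreg_hFun_sq {S ρ : ℝ → ℝ} (hS : ∀ x, HasDerivAt S (ρ x) x) (hρ : Continuous ρ)
    {σ b : ℝ → ℝ} (hσ : Continuous σ) (hb : Continuous b) (Φ : SchwartzMap ℝ ℝ) (n : ℕ) :
    Continuous (Lreg σ b Φ n fun x => hFun S x ^ 2) := by
  have hSc : Continuous S := continuous_iff_continuousAt.mpr fun x => (hS x).continuousAt
  have := continuous_hFun hSc
  have := continuous_sigmaSqReg hσ Φ n
  have := continuous_deriv_bReg hb Φ n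
  rw [funext (lreg_hFun_sq hS σ b Φ n)]
  fun_prop

theorem TendstoLocallyUniformly.hFun {ι : Type*} {p : Filter ι} {S : ι → ℝ → ℝ} {S₀ : ℝ → ℝ}
    (hS : ∀ n, Continuous (S n)) (hS₀ : Continuous S₀) (h : TendstoLocallyUniformly S S₀ p) :
    TendstoLocallyUniformly (fun n => hFun (S n)) (hFun S₀) p :=
  TendstoLocallyUniformly.intervalIntegral (fun n => by fun_prop) (by fun_prop)
    ((by fun_prop : Continuous fun t : ℝ => Real.exp (-t)).comp_tendstoLocallyUniformly hS₀ h) 0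

/-- `ρₙ = Sₙ'`. As `Φ` may change sign, `σₙ²` may vanish; the floor `1/(n+1)` keeps `ρₙ`
continuous and is inactive on compact sets for large `n`. -/
def driftRatio (σ b : ℝ → ℝ) (Φ : SchwartzMap ℝ ℝ) (n : ℕ) (y : ℝ) : ℝ :=
  2 * deriv (bReg b Φ n) y / max (sigmaSqReg σ Φ n y) ((n : ℝ) + 1)⁻¹

def sigmaReg (σ b : ℝ → ℝ) (Φ : SchwartzMap ℝ ℝ) (n : ℕ) (x : ℝ) : ℝ :=
  ∫ y in (0 : ℝ)..x, driftRatio σ b Φ n y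

section Regularized

variable {σ b : ℝ → ℝ}

lemma continuous_driftRatio (hσ : Continuous σ) (hb : Continuous b) (Φ : SchwartzMap ℝ ℝ)
    (n : ℕ) : Continuous (driftRatio σ b Φ n) :=
  (continuous_const.mul (continuous_deriv_bReg hb Φ n)).div
    ((continuous_sigmaSqReg hσ Φ n).max continuous_const)
    fun y => (lt_max_of_lt_right (by positivity)).ne'

lemma hasDerivAt_sigmaReg (hσ : Continuous σ) (hb : Continuous b) (Φ : SchwartzMap ℝ ℝ)
    (n : ℕ) (x : ℝ) : HasDerivAt (sigmaReg σ b Φ n) (driftRatio σ b Φ n x) x :=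
  ((continuous_driftRatio hσ hb Φ n).integral_hasStrictDerivAt 0 x).hasDerivAt

lemma contDiff_sigmaReg (hσ : Continuous σ) (hb : Continuous b) (Φ : SchwartzMap ℝ ℝ) (n : ℕ) :
    ContDiff ℝ 1 (sigmaReg σ b Φ n) :=
  contDiff_succ_intervalIntegral (k := 0) (contDiff_zero.mpr (continuous_driftRatio hσ hb Φ n)) 0

lemma sigmaSqReg_mul_driftRatio {Φ : SchwartzMap ℝ ℝ} {n : ℕ} {y : ℝ}
    (hy : ((n : ℝ) + 1)⁻¹ ≤ sigmaSqReg σ Φ n y) :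
    sigmaSqReg σ Φ n y * driftRatio σ b Φ n y = 2 * deriv (bReg b Φ n) y := by
  rw [driftRatio, max_eq_left hy, mul_div_cancel₀ _ (lt_of_lt_of_le (by positivity) hy).ne']

lemma lreg_hFun_sigmaReg_sq (hσ : Continuous σ) (hb : Continuous b) {Φ : SchwartzMap ℝ ℝ}
    {n : ℕ} {x : ℝ} (hx : ((n : ℝ) + 1)⁻¹ ≤ sigmaSqReg σ Φ n x) :
    Lreg σ b Φ n (fun x => hFun (sigmaReg σ b Φ n) x ^ 2) x =
      sigmaSqReg σ Φ n x * Real.exp (-(2 * sigmaReg σ b Φ n x)) := by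
  rw [lreg_hFun_sq (hasDerivAt_sigmaReg hσ hb Φ n), sigmaSqReg_mul_driftRatio hx, sub_self,
    mul_zero, add_zero]

lemma sigmaReg_eq_sigmaApprox {Φ : SchwartzMap ℝ ℝ} {n : ℕ} {x : ℝ}
    (hx : ∀ y ∈ uIcc 0 x, ((n : ℝ) + 1)⁻¹ ≤ sigmaSqReg σ Φ n y) :
    sigmaReg σ b Φ n x = SigmaApprox σ b Φ n x := by
  rw [sigmaReg, SigmaApprox, ← intervalIntegral.integral_const_mul]
  refine intervalIntegral.integral_congr fun y hy => ?_
  rw [driftRatio, max_eq_left (hx y hy), mul_div_assoc]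

theorem tendstoLocallyUniformly_sigmaReg (hσ : Continuous σ) (hσpos : ∀ x, 0 < σ x)
    {Φ : SchwartzMap ℝ ℝ} (hΦ : IsMollifier Φ) {Sg : ℝ → ℝ}
    (hSg : TendstoLocallyUniformly (SigmaApprox σ b Φ) Sg atTop) :
    TendstoLocallyUniformly (sigmaReg σ b Φ) Sg atTop := by
  refine hSg.congr_eventuallyEqOn_isCompact fun K hK => ?_
  obtain ⟨R, hKR⟩ := hK.isBounded.subset_closedBall 0
  filter_upwards [(tendstoLocallyUniformly_sigmaSqReg hσ hΦ).eventually_inv_succ_le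
    (by fun_prop) (fun x => pow_pos (hσpos x) 2) (isCompact_closedBall 0 R)] with n hn x hx
  exact (sigmaReg_eq_sigmaApprox fun y hy => hn y ((convex_closedBall 0 R).ordConnected.uIcc_subset
    (Metric.mem_closedBall_self (dist_nonneg.trans (hKR hx))) (hKR hx) hy)).symm

end Regularized

theorem statement8_general (σ b Sg : ℝ → ℝ) (hσc : Continuous σ) (hσpos : ∀ x, 0 < σ x)
    (hbc : Continuous b) (hSg : SigmaExists σ b Sg) :
    IsC1GenSolution σ b (fun x => hFun Sg x ^ 2)
      (fun x => σ x ^ 2 * Real.exp (-(2 * Sg x))) := by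
  obtain ⟨hSgc, hSgconv⟩ := hSg
  have hhc := continuous_hFun hSgc
  refine ⟨(contDiff_hFun (k := 0) (contDiff_zero.mpr hSgc)).pow 2, by fun_prop, fun Φ hΦ => ?_⟩
  have hSc n := (contDiff_sigmaReg hσc hbc Φ n).continuous
  have hσn := tendstoLocallyUniformly_sigmaSqReg hσc hΦ
  have hS := tendstoLocallyUniformly_sigmaReg hσc hσpos hΦ (hSgconv Φ hΦ)
  have hh := hS.hFun hSc hSgc
  refine ⟨fun n x => hFun (sigmaReg σ b Φ n) x ^ 2,
    fun n => (contDiff_hFun (k := 1) (contDiff_sigmaReg hσc hbc Φ n)).pow 2,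
    fun n => continuous_lreg_hFun_sq (hasDerivAt_sigmaReg hσc hbc Φ n)
      (continuous_driftRatio hσc hbc Φ n) hσc hbc Φ n,
    (continuous_pow 2).comp_tendstoLocallyUniformly hhc hh, ?_, ?_⟩
  · rw [deriv_hFun_sq hSgc]
    simp only [deriv_hFun_sq (hSc _)]
    exact (by fun_prop : Continuous fun q : ℝ × ℝ => 2 * q.1 * Real.exp (-q.2))
      |>.comp_tendstoLocallyUniformly (by fun_prop) (hh.prodMk hS)
  · refine (by fun_prop : Continuous fun q : ℝ × ℝ => q.1 * Real.exp (-(2 * q.2)))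
      |>.comp_tendstoLocallyUniformly (by fun_prop) (hσn.prodMk hS)
      |>.congr_eventuallyEqOn_isCompact fun K hK => ?_
    filter_upwards [hσn.eventually_inv_succ_le (by fun_prop) (fun x => pow_pos (hσpos x) 2) hK]
      with n hn x hx
    exact (lreg_hFun_sigmaReg_sq hσc hbc (hn x hx)).symm

/-- Proposition 2.15(a): `h² ∈ 𝒟_L` with `L(h²) = (h')² σ²`,
i.e. `h²` is a `C¹`-generalized solution of `L(h²) = σ² e^{−2Σ}`. -/
theorem statement8 (σ b Sg : ℝ → ℝ) (hσc : Continuous σ) (hσpos : ∀ x, 0 < σ x)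
    (hbc : Continuous b) (hb0 : b 0 = 0) (hSg : SigmaExists σ b Sg) :
    IsC1GenSolution σ b (fun x => hFun Sg x ^ 2)
      (fun x => σ x ^ 2 * Real.exp (-(2 * Sg x))) :=
  statement8_general σ b Sg hσc hσpos hbc hSg

end
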